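/- arXiv:1906.09162 — 6 statements merged into one kernel-verified Lean document; each statement's English description precedes it below -/
import Mathlib

section
/- Let p > q > 1 be coprime integers with negative continued fraction expansion p/q = [a_1,...,a_l] (each a_i ≥ 2). Then length(p/q) + length(p/(p-q)) = 1 + Σ_{i=1}^{l}(a_i - 1), where length denotes the number of terms in the negative continued fraction expansion with all entries ≥ 2. -/
/-!
Let `f x = x / (x - 1)`, so that `f (p / q) = p / (p - q)`. From `f (x + 1) = 2 - 1 / f x` and
`f (2 - 1 / w) = f w + 1` one reads off an expansion of `f (a - 1 / w)` from one of `f w`: raise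
the first entry of the latter by one and prepend `a - 2` twos. The resulting expansion `dual L`
of `f (ncf L)` has length `1 + ∑ (aᵢ - 1) - l` by construction. Expansions with entries `≥ 2`
are unique, because the first entry of `a - 1 / w` is its ceiling (`0 ≤ 1 / w < 1`), so
`dual L` is the expansion of `p / (p - q)`.
-/

/-- Value of a negative continued fraction `[a₁, a₂, …, aₗ] = a₁ - 1/(a₂ - 1/(… - 1/aₗ))`. -/
def ncf : List ℚ → ℚ
  | [] => 0
  | a :: l => a - (ncf l)⁻¹

@[simp] lemma ncf_nil : ncf [] = 0 := rfl

@[simp] lemma ncf_cons (a : ℚ) (K : List ℚ) : ncf (a :: K) = a - (ncf K)⁻¹ := rfl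

lemma inv_ncf_mem_Ico {K : List ℚ} (hK : ∀ b ∈ K, 2 ≤ b) : (ncf K)⁻¹ ∈ Set.Ico 0 1 := by
  induction K with
  | nil => simp
  | cons a K ih =>
    rw [List.forall_mem_cons] at hK
    have hu := ih hK.2
    have h1 : 1 < ncf (a :: K) := by rw [ncf_cons]; linarith [hu.2, hK.1]
    exact ⟨by positivity, inv_lt_one_of_one_lt₀ h1⟩

lemma one_lt_ncf_cons {a : ℚ} {K : List ℚ} (ha : 2 ≤ a) (hK : ∀ b ∈ K, 2 ≤ b) :
    1 < ncf (a :: K) := by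
  rw [ncf_cons]
  linarith [(inv_ncf_mem_Ico hK).2]

lemma ceil_ncf_cons (a : ℤ) {K : List ℚ} (hK : ∀ b ∈ K, 2 ≤ b) : ⌈ncf (a :: K)⌉ = a := by
  have hu := inv_ncf_mem_Ico hK
  rw [Int.ceil_eq_iff, ncf_cons]
  constructor <;> linarith [hu.1, hu.2]

lemma two_le_of_mem_map_natCast {K : List ℕ} (hK : ∀ b ∈ K, 2 ≤ b) :
    ∀ b ∈ K.map ((↑) : ℕ → ℚ), 2 ≤ b := by
  simpa using hK

lemma ncf_map_natCast_injective {K K' : List ℕ} (hK : ∀ b ∈ K, 2 ≤ b) (hK' : ∀ b ∈ K', 2 ≤ b)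
    (h : ncf (K.map (↑)) = ncf (K'.map (↑))) : K = K' := by
  have hceil (a : ℕ) {t : List ℕ} (ht : ∀ b ∈ t, 2 ≤ b) : ⌈ncf ((a :: t).map (↑))⌉ = a := by
    exact_mod_cast ceil_ncf_cons a (two_le_of_mem_map_natCast ht)
  induction K generalizing K' with
  | nil =>
    obtain _ | ⟨b, s⟩ := K'
    · rfl
    · rw [List.forall_mem_cons] at hK'
      have := hceil b hK'.2
      rw [← h, List.map_nil, ncf_nil, Int.ceil_zero] at this
      omega
  | cons a t ih =>
    rw [List.forall_mem_cons] at hK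
    obtain _ | ⟨b, s⟩ := K'
    · have := hceil a hK.2
      rw [h, List.map_nil, ncf_nil, Int.ceil_zero] at this
      omega
    · rw [List.forall_mem_cons] at hK'
      obtain rfl : a = b := by exact_mod_cast (hceil a hK.2).symm.trans (h ▸ hceil b hK'.2)
      simp only [List.map_cons, ncf_cons, sub_right_inj, inv_inj] at h
      rw [ih hK.2 hK'.2 h]

lemma ncf_replicate_two_append {K : List ℚ} {y : ℚ} (hy : 1 < y) (hK : ncf K = y / (y - 1))
    (k : ℕ) : ncf (List.replicate k 2 ++ K) = (y + k) / (y + k - 1) := by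
  induction k with
  | zero => simpa using hK
  | succ k ih =>
    have : 0 < y + k := by have := k.cast_nonneg (α := ℚ); linarith
    rw [List.replicate_succ, List.cons_append, ncf_cons, ih, inv_div, Nat.cast_succ,
      show y + (k + 1 : ℚ) - 1 = y + k by ring]
    field_simp
    ring

lemma ncf_modifyHead_succ {K : List ℕ} (hK : K ≠ []) :
    ncf ((K.modifyHead (· + 1)).map (↑)) = ncf (K.map (↑)) + 1 := by
  obtain ⟨a, K, rfl⟩ := List.exists_cons_of_ne_nil hK
  simp only [List.modifyHead_cons, List.map_cons, ncf_cons]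
  push_cast
  ring

-- `[]` is the expansion of `∞` (its inverse is `0` in `ncf`), and `[1]` that of `∞ / (∞ - 1) = 1`.
def dual : List ℕ → List ℕ
  | [] => [1]
  | a :: t => List.replicate (a - 2) 2 ++ (dual t).modifyHead (· + 1)

lemma dual_ne_nil (L : List ℕ) : dual L ≠ [] := by
  induction L <;> simp_all [dual]

lemma two_le_of_mem_dual {L : List ℕ} (hL : L ≠ []) : ∀ b ∈ dual L, 2 ≤ b := by
  induction L with
  | nil => exact absurd rfl hL
  | cons a t ih =>
    have hhead : ∀ b ∈ (dual t).modifyHead (· + 1), 2 ≤ b := by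
      obtain rfl | ht := eq_or_ne t []
      · simp [dual]
      · obtain ⟨c, s, hcs⟩ := List.exists_cons_of_ne_nil (dual_ne_nil t)
        have := ih ht
        rw [hcs, List.forall_mem_cons] at this
        rw [hcs, List.modifyHead_cons, List.forall_mem_cons]
        exact ⟨by omega, this.2⟩
    intro b hb
    rcases List.mem_append.1 hb with hb | hb
    · exact (List.eq_of_mem_replicate hb).ge
    · exact hhead b hb

lemma length_add_length_dual {L : List ℕ} (hL : ∀ a ∈ L, 2 ≤ a) :
    L.length + (dual L).length = 1 + (L.map (· - 1)).sum := by
  induction L with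
  | nil => simp [dual]
  | cons a t ih =>
    rw [List.forall_mem_cons] at hL
    have := ih hL.2
    simp only [dual, List.length_cons, List.length_append, List.length_replicate,
      List.length_modifyHead, List.map_cons, List.sum_cons]
    omega

lemma ncf_dual {L : List ℕ} (hL : ∀ b ∈ L, 2 ≤ b) (hne : L ≠ []) :
    ncf ((dual L).map (↑)) = ncf (L.map (↑)) / (ncf (L.map (↑)) - 1) := by
  induction L with
  | nil => exact absurd rfl hne
  | cons a t ih =>
    rw [List.forall_mem_cons] at hL
    set w := ncf (t.map (↑)) with hw
    have hu := inv_ncf_mem_Ico (two_le_of_mem_map_natCast hL.2)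
    rw [← hw] at hu
    have hhead : ncf (((dual t).modifyHead (· + 1)).map (↑)) = (2 - w⁻¹) / (2 - w⁻¹ - 1) := by
      obtain rfl | ht := eq_or_ne t []
      · simp [dual, hw]
        norm_num
      · obtain ⟨c, s, rfl⟩ := List.exists_cons_of_ne_nil ht
        have hw1 : 1 < w := by
          rw [List.forall_mem_cons] at hL
          rw [hw]
          exact one_lt_ncf_cons (by exact_mod_cast hL.2.1) (two_le_of_mem_map_natCast hL.2.2)
        rw [ncf_modifyHead_succ (dual_ne_nil _), ih hL.2 (List.cons_ne_nil _ _)]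
        have : w - 1 ≠ 0 := by linarith
        rw [eq_div_iff (by linarith [hu.2])]
        field_simp
        ring
    have hy : 1 < 2 - w⁻¹ := by linarith [hu.2]
    rw [dual, List.map_append, List.map_replicate, Nat.cast_ofNat,
      ncf_replicate_two_append hy hhead,
      Nat.cast_sub hL.1]
    simp only [List.map_cons, ncf_cons, ← hw]
    congr 1 <;> push_cast <;> ring

theorem stmt0_general (p q : ℕ) (hq : 1 < q) (hpq : q < p)
    (L M : List ℕ)
    (hL2 : ∀ a ∈ L, 2 ≤ a) (hM2 : ∀ a ∈ M, 2 ≤ a)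
    (hL : ncf (L.map (fun a => (a : ℚ))) = (p : ℚ) / (q : ℚ))
    (hM : ncf (M.map (fun a => (a : ℚ))) = (p : ℚ) / ((p : ℚ) - (q : ℚ))) :
    L.length + M.length = 1 + (L.map (fun a => a - 1)).sum := by
  -- `L.map (fun a => (a : ℚ))` elaborates as a `do` block in the list monad.
  simp only [List.pure_def, List.bind_eq_flatMap, List.map_id_fun', id_eq,
    ← List.map_eq_flatMap] at hL hM
  have hq0 : (q : ℚ) ≠ 0 := by positivity
  have hLne : L ≠ [] := by
    rintro rfl
    rw [List.map_nil, ncf_nil, eq_comm] at hL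
    exact div_ne_zero (Nat.cast_ne_zero.2 (by omega)) hq0 hL
  have hMdual : M = dual L := by
    refine ncf_map_natCast_injective hM2 (two_le_of_mem_dual hLne) ?_
    rw [hM, ncf_dual hL2 hLne, hL]
    field_simp
  rw [hMdual]
  exact length_add_length_dual hL2

theorem stmt0 (p q : ℕ) (hq : 1 < q) (hpq : q < p) (hcop : Nat.Coprime p q)
    (L M : List ℕ)
    (hL2 : ∀ a ∈ L, 2 ≤ a) (hM2 : ∀ a ∈ M, 2 ≤ a)
    (hL : ncf (L.map (fun a => (a : ℚ))) = (p : ℚ) / (q : ℚ))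
    (hM : ncf (M.map (fun a => (a : ℚ))) = (p : ℚ) / ((p : ℚ) - (q : ℚ))) :
    L.length + M.length = 1 + (L.map (fun a => a - 1)).sum :=
  stmt0_general p q hq hpq L M hL2 hM2 hL hM
end

section
/- Let a_1,...,a_l ≥ 2 and let c_1,...,c_m ≥ 2 be the Riemenschneider dual string, i.e. [c_1,...,c_m] is the negative continued fraction expansion of p/(p-q) where p/q = [a_1,...,a_l]. Then Σ_{i=1}^{l}(a_i - 2) + 1 = m and Σ_{j=1}^{m}(c_j - 2) + 1 = l. -/
section Bounds

variable {L : List ℚ}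

lemma one_lt_ncf_cons_s1 (a : ℚ) (h : ∀ b ∈ a :: L, 2 ≤ b) : 1 < ncf (a :: L) := by
  induction L generalizing a with
  | nil => simpa [ncf] using (by linarith [h a (by simp)] : (1 : ℚ) < a)
  | cons b L ih =>
    have hb : 1 < ncf (b :: L) := ih b fun c hc => h c (List.mem_cons_of_mem a hc)
    have : (ncf (b :: L))⁻¹ < 1 := inv_lt_one_of_one_lt₀ hb
    have ha : 2 ≤ a := h a List.mem_cons_self
    rw [ncf]
    linarith

lemma ncf_eq_zero_or_one_lt (h : ∀ b ∈ L, 2 ≤ b) : ncf L = 0 ∨ 1 < ncf L := by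
  cases L with
  | nil => exact Or.inl rfl
  | cons a L => exact Or.inr (one_lt_ncf_cons_s1 a h)

lemma ncf_eq_zero_iff (h : ∀ b ∈ L, 2 ≤ b) : ncf L = 0 ↔ L = [] := by
  refine ⟨fun h0 => ?_, fun hL => hL ▸ rfl⟩
  cases L with
  | nil => rfl
  | cons a L => linarith [one_lt_ncf_cons_s1 a h]

lemma inv_ncf_nonneg (h : ∀ b ∈ L, 2 ≤ b) : 0 ≤ (ncf L)⁻¹ := by
  rcases ncf_eq_zero_or_one_lt h with h0 | h1
  · simp [h0]
  · positivity

lemma inv_ncf_lt_one (h : ∀ b ∈ L, 2 ≤ b) : (ncf L)⁻¹ < 1 := by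
  rcases ncf_eq_zero_or_one_lt h with h0 | h1
  · simp [h0]
  · exact inv_lt_one_of_one_lt₀ h1

end Bounds

-- `L.map (fun a => (a : ℚ))` elaborates by first coercing `L` to a `List ℚ` through its monad
-- structure, then mapping the identity.
lemma map_coe_eq_map_cast (L : List ℕ) : L.map (fun a => (a : ℚ)) = L.map (Nat.cast : ℕ → ℚ) := by
  simp only [List.map_id']
  exact List.flatMap_pure_eq_map Nat.cast L

def RiemenschneiderDual (x y : ℚ) : Prop := (x - 1) * (y - 1) = 1

lemma RiemenschneiderDual.symm {x y : ℚ} (h : RiemenschneiderDual x y) :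
    RiemenschneiderDual y x := by
  rwa [RiemenschneiderDual, mul_comm]

section Duality

variable {L M : List ℕ}

lemma cast_two_le (h : ∀ a ∈ L, 2 ≤ a) : ∀ b ∈ L.map ((↑) : ℕ → ℚ), 2 ≤ b := by
  intro b hb
  obtain ⟨a, ha, rfl⟩ := List.mem_map.mp hb
  exact_mod_cast h a ha

lemma ne_nil_of_riemenschneiderDual (hM : ∀ c ∈ M, 2 ≤ c) (hM0 : M ≠ [])
    (h : RiemenschneiderDual (ncf (L.map (↑))) (ncf (M.map (↑)))) : L ≠ [] := by
  rintro rfl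
  obtain ⟨c, M, rfl⟩ := List.exists_cons_of_ne_nil hM0
  have := one_lt_ncf_cons_s1 (c : ℚ) (cast_two_le hM)
  simp only [RiemenschneiderDual, List.map_nil, List.map_cons, ncf] at h this
  linarith

lemma riemenschneiderDual_of_three_le_head {a : ℕ} (hL : ∀ b ∈ L, 2 ≤ b)
    (hM : ∀ c ∈ M, 2 ≤ c) (ha : 3 ≤ a)
    (h : RiemenschneiderDual (ncf ((a :: L).map (↑))) (ncf (M.map (↑)))) :
    ∃ M', M = 2 :: M' ∧ RiemenschneiderDual (ncf (((a - 1) :: L).map (↑))) (ncf (M'.map (↑))) := by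
  set t := (ncf (L.map ((↑) : ℕ → ℚ)))⁻¹
  have ht0 : 0 ≤ t := inv_ncf_nonneg (cast_two_le hL)
  have ht1 : t < 1 := inv_ncf_lt_one (cast_two_le hL)
  have ha' : (3 : ℚ) ≤ a := by exact_mod_cast ha
  simp only [RiemenschneiderDual, List.map_cons, ncf] at h ⊢
  rw [Nat.cast_sub (by omega), Nat.cast_one]
  -- `x - 1 > 1` makes `y - 1 ∈ (0, 1)`.
  have hy0 : 0 < ncf (M.map ((↑) : ℕ → ℚ)) - 1 := by nlinarith
  have hy1 : ncf (M.map ((↑) : ℕ → ℚ)) - 1 < 1 := by nlinarith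
  obtain _ | ⟨c, M'⟩ := M
  · simp only [List.map_nil, ncf] at hy0
    linarith
  obtain ⟨hc2, hM'⟩ := List.forall_mem_cons.mp hM
  set s := (ncf (M'.map ((↑) : ℕ → ℚ)))⁻¹
  have hs0 : 0 ≤ s := inv_ncf_nonneg (cast_two_le hM')
  have hs1 : s < 1 := inv_ncf_lt_one (cast_two_le hM')
  simp only [List.map_cons, ncf] at h hy0 hy1
  obtain rfl : c = 2 := by
    have : (c : ℚ) < 3 := by linarith
    have : c < 3 := by exact_mod_cast this
    omega
  refine ⟨M', rfl, ?_⟩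
  have hm : ncf (M'.map ((↑) : ℕ → ℚ)) ≠ 0 := by
    intro hm
    simp only [hm, inv_zero] at h
    nlinarith
  have : (ncf (M'.map ((↑) : ℕ → ℚ)) - 1) * s = 1 - s := by
    simp only [s]
    field_simp
  push_cast at h
  nlinarith

lemma eq_nil_of_riemenschneiderDual_two_cons_two_cons (hL : ∀ a ∈ L, 2 ≤ a)
    (hM : ∀ c ∈ M, 2 ≤ c)
    (h : RiemenschneiderDual (ncf ((2 :: L).map (↑))) (ncf ((2 :: M).map (↑)))) : L = [] := by
  have ht0 := inv_ncf_nonneg (cast_two_le hL)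
  have hs0 := inv_ncf_nonneg (cast_two_le hM)
  have hs1 := inv_ncf_lt_one (cast_two_le hM)
  simp only [RiemenschneiderDual, List.map_cons, Nat.cast_ofNat, ncf] at h
  -- `(1 - t)(1 - s) = 1` with `t, s ∈ [0, 1)` forces `t = 0`.
  have ht : (ncf (L.map ((↑) : ℕ → ℚ)))⁻¹ = 0 := by nlinarith
  rwa [inv_eq_zero, ncf_eq_zero_iff (cast_two_le hL), List.map_eq_nil_iff] at ht

theorem sum_sub_two_add_one_eq_length_of_riemenschneiderDual
    (hL : ∀ a ∈ L, 2 ≤ a) (hM : ∀ c ∈ M, 2 ≤ c) (hL0 : L ≠ [])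
    (h : RiemenschneiderDual (ncf (L.map (↑))) (ncf (M.map (↑)))) :
    (L.map (· - 2)).sum + 1 = M.length := by
  induction hn : L.sum + M.sum using Nat.strong_induction_on generalizing L M with
  | _ n ih =>
  obtain ⟨a, L, rfl⟩ := List.exists_cons_of_ne_nil hL0
  obtain ⟨c, M, rfl⟩ := List.exists_cons_of_ne_nil (ne_nil_of_riemenschneiderDual hL hL0 h.symm)
  rw [List.forall_mem_cons] at hL hM
  obtain ⟨ha2, hL⟩ := hL
  obtain ⟨hc2, hM⟩ := hM
  by_cases ha : 3 ≤ a
  · obtain ⟨M', hM', h'⟩ :=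
      riemenschneiderDual_of_three_le_head hL (List.forall_mem_cons.mpr ⟨hc2, hM⟩) ha h
    obtain ⟨rfl, rfl⟩ := List.cons_eq_cons.mp hM'
    have := ih _ (by simp only [← hn, List.sum_cons]; omega) (L := (a - 1) :: L)
      (List.forall_mem_cons.mpr ⟨by omega, hL⟩) hM (List.cons_ne_nil _ _) h' rfl
    simp only [List.map_cons, List.sum_cons, List.length_cons] at this ⊢
    omega
  by_cases hc : 3 ≤ c
  · obtain ⟨L', hL', h'⟩ :=
      riemenschneiderDual_of_three_le_head hM (List.forall_mem_cons.mpr ⟨ha2, hL⟩) hc h.symm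
    obtain ⟨rfl, rfl⟩ := List.cons_eq_cons.mp hL'
    have hM' : ∀ b ∈ (c - 1) :: M, 2 ≤ b := List.forall_mem_cons.mpr ⟨by omega, hM⟩
    have hL0 : L ≠ [] := ne_nil_of_riemenschneiderDual hM' (List.cons_ne_nil _ _) h'.symm
    have := ih _ (by simp only [← hn, List.sum_cons]; omega) hL hM' hL0 h'.symm rfl
    simpa using this
  obtain rfl : a = 2 := by omega
  obtain rfl : c = 2 := by omega
  obtain rfl := eq_nil_of_riemenschneiderDual_two_cons_two_cons hL hM h
  obtain rfl := eq_nil_of_riemenschneiderDual_two_cons_two_cons hM hL h.symm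
  rfl

end Duality

theorem stmt1_general (p q : ℕ) (hq : 1 ≤ q) (hpq : q < p)
    (L M : List ℕ)
    (hL2 : ∀ a ∈ L, 2 ≤ a) (hM2 : ∀ c ∈ M, 2 ≤ c)
    (hL : ncf (L.map (fun a => (a : ℚ))) = (p : ℚ) / (q : ℚ))
    (hM : ncf (M.map (fun c => (c : ℚ))) = (p : ℚ) / ((p : ℚ) - (q : ℚ))) :
    (L.map (fun a => a - 2)).sum + 1 = M.length ∧
    (M.map (fun c => c - 2)).sum + 1 = L.length := by
  rw [map_coe_eq_map_cast] at hL hM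
  have hq0 : (q : ℚ) ≠ 0 := Nat.cast_ne_zero.mpr (by omega)
  have hpq0 : (p : ℚ) - q ≠ 0 := sub_ne_zero.mpr (by exact_mod_cast hpq.ne')
  have hdual : RiemenschneiderDual (ncf (L.map (↑))) (ncf (M.map (↑))) := by
    rw [RiemenschneiderDual, hL, hM]
    field_simp
    ring
  have hL0 : L ≠ [] := by
    rintro rfl
    simp [ncf, eq_comm (a := (0 : ℚ))] at hL
    omega
  have hM0 : M ≠ [] := ne_nil_of_riemenschneiderDual hL2 hL0 hdual.symm
  exact ⟨sum_sub_two_add_one_eq_length_of_riemenschneiderDual hL2 hM2 hL0 hdual,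
    sum_sub_two_add_one_eq_length_of_riemenschneiderDual hM2 hL2 hM0 hdual.symm⟩

/-- If `[a₁,…,a_l]` is the negative continued fraction expansion of `p/q` and
`[c₁,…,c_m]` is the (Riemenschneider dual) expansion of `p/(p-q)`, then
`Σ(aᵢ-2)+1 = m` and `Σ(cⱼ-2)+1 = l`. -/
theorem stmt1 (p q : ℕ) (hq : 1 ≤ q) (hpq : q < p) (hcop : Nat.Coprime p q)
    (L M : List ℕ)
    (hL2 : ∀ a ∈ L, 2 ≤ a) (hM2 : ∀ c ∈ M, 2 ≤ c)
    (hL : ncf (L.map (fun a => (a : ℚ))) = (p : ℚ) / (q : ℚ))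
    (hM : ncf (M.map (fun c => (c : ℚ))) = (p : ℚ) / ((p : ℚ) - (q : ℚ))) :
    (L.map (fun a => a - 2)).sum + 1 = M.length ∧
    (M.map (fun c => c - 2)).sum + 1 = L.length :=
  stmt1_general p q hq hpq L M hL2 hM2 hL hM
end

section
/- Let Q be the n×n tridiagonal integer matrix with diagonal entries -v_1,...,-v_n where each v_i ≥ 2, and off-diagonal entries 1 on the super- and sub-diagonal (all other entries 0). If x ∈ ℝ^n is a nonzero vector with Qx ≥ 0 componentwise, then x_i < 0 for every i. -/
/-!
Write `Q = A - diag v`, where `A` is the adjacency matrix of the path graph, whose vertices have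
degree at most `2 ≤ v i`, and degree at most `1` at an end. This is a discrete maximum principle:
if `x` attains its maximum `M ≥ 0` at `i`, then
`(Q x) i = -(∑_{j ~ i} (M - x j) + (v i - deg i) * M)` is a sum of nonpositive terms, so
`(Q x) i ≥ 0` forces every neighbour of `i` to be a maximum too. By connectedness `x` is constant
equal to `M`, and at an end of the path `(v i - deg i) * M = 0` gives `M = 0`, i.e. `x = 0`.
-/

open Matrix

/-- The tridiagonal matrix with diagonal entries `-v i` and `1`'s on the
super- and sub-diagonal. -/
def triQ {n : ℕ} (v : Fin n → ℤ) : Matrix (Fin n) (Fin n) ℝ :=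
  Matrix.of fun i j =>
    if i = j then -(v i : ℝ)
    else if (i : ℕ) + 1 = (j : ℕ) ∨ (j : ℕ) + 1 = (i : ℕ) then 1 else 0

namespace SimpleGraph

variable {V : Type*} {G : SimpleGraph V}

theorem Reachable.of_forall_adj_imp {P : V → Prop} {u v : V} (huv : G.Reachable u v)
    (hP : ∀ a b, G.Adj a b → P a → P b) (hu : P u) : P v := by
  rw [reachable_iff_reflTransGen] at huv
  induction huv with
  | refl => exact hu
  | tail _ hab ih => exact hP _ _ hab ih

variable [Fintype V] [DecidableEq V] [DecidableRel G.Adj]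

theorem adjMatrix_sub_diagonal_mulVec_apply (w x : V → ℝ) (i : V) :
    ((G.adjMatrix ℝ - diagonal w) *ᵥ x) i =
      -(∑ j ∈ G.neighborFinset i, (x i - x j) + (w i - G.degree i) * x i) := by
  simp [sub_mulVec, mulVec_diagonal, Finset.sum_sub_distrib, card_neighborFinset_eq_degree]
  ring

theorem forall_adj_eq_and_mul_eq_zero_of_forall_le {w x : V → ℝ} (hw : ∀ i, G.degree i ≤ w i)
    {i : V} (hmax : ∀ j, x j ≤ x i) (hi : 0 ≤ x i) (h : 0 ≤ ((G.adjMatrix ℝ - diagonal w) *ᵥ x) i) :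
    (∀ j, G.Adj i j → x j = x i) ∧ (w i - G.degree i) * x i = 0 := by
  rw [adjMatrix_sub_diagonal_mulVec_apply] at h
  have hsum : 0 ≤ ∑ j ∈ G.neighborFinset i, (x i - x j) :=
    Finset.sum_nonneg fun j _ => sub_nonneg.2 (hmax j)
  have hdiag : 0 ≤ (w i - G.degree i) * x i := mul_nonneg (sub_nonneg.2 (hw i)) hi
  refine ⟨fun j hij => ?_, by linarith⟩
  have := (Finset.sum_eq_zero_iff_of_nonneg fun j _ => sub_nonneg.2 (hmax j)).1 (by linarith) j
    ((mem_neighborFinset G i j).2 hij)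
  linarith

theorem Preconnected.lt_zero_of_adjMatrix_sub_diagonal_mulVec_nonneg (hG : G.Preconnected)
    {w x : V → ℝ} (hw : ∀ i, G.degree i ≤ w i) {i₀ : V} (hi₀ : G.degree i₀ < w i₀) (hx : x ≠ 0)
    (h : ∀ i, 0 ≤ ((G.adjMatrix ℝ - diagonal w) *ᵥ x) i) (i : V) : x i < 0 := by
  by_contra! hxi
  have : Nonempty V := ⟨i⟩
  obtain ⟨m, hm⟩ := Finite.exists_max x
  have hM : 0 ≤ x m := hxi.trans (hm i)
  have hmax_at {a : V} (ha : x a = x m) :=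
    forall_adj_eq_and_mul_eq_zero_of_forall_le hw (ha ▸ hm) (ha ▸ hM) (h a)
  have hconst (j : V) : x j = x m :=
    (hG m j).of_forall_adj_imp (P := fun j => x j = x m)
      (fun a b hab ha => ((hmax_at ha).1 b hab).trans ha) rfl
  have hM0 : x m = 0 := by
    have := (hmax_at (hconst i₀)).2
    rw [hconst i₀] at this
    exact (mul_eq_zero.1 this).resolve_left (sub_ne_zero.2 hi₀.ne')
  exact hx (funext fun j => (hconst j).trans hM0)

instance (n : ℕ) : DecidableRel (pathGraph n).Adj := fun _ _ => decidable_of_iff' _ pathGraph_adj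

theorem pathGraph_degree_le_two {n : ℕ} (i : Fin n) : (pathGraph n).degree i ≤ 2 := by
  rw [← card_neighborFinset_eq_degree]
  calc _ ≤ ({(i : ℕ) + 1, (i : ℕ) - 1} : Finset ℕ).card :=
        Finset.card_le_card_of_injOn Fin.val (fun j hj => by
          simp only [Finset.mem_coe, mem_neighborFinset, pathGraph_adj, Finset.coe_insert,
            Finset.coe_singleton, Set.mem_insert_iff, Set.mem_singleton_iff] at hj ⊢
          omega) Fin.val_injective.injOn
    _ ≤ 2 := Finset.card_le_two

theorem pathGraph_degree_zero_le_one {n : ℕ} (hn : 0 < n) : (pathGraph n).degree ⟨0, hn⟩ ≤ 1 := by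
  rw [← card_neighborFinset_eq_degree]
  calc _ ≤ ({1} : Finset ℕ).card :=
        Finset.card_le_card_of_injOn Fin.val (fun j hj => by
          simp only [Finset.mem_coe, mem_neighborFinset, pathGraph_adj, Finset.coe_singleton,
            Set.mem_singleton_iff] at hj ⊢
          omega) Fin.val_injective.injOn
    _ = 1 := Finset.card_singleton 1

end SimpleGraph

theorem triQ_eq_adjMatrix_sub_diagonal {n : ℕ} (v : Fin n → ℤ) :
    triQ v = (SimpleGraph.pathGraph n).adjMatrix ℝ - diagonal fun i => (v i : ℝ) := by
  ext i j
  by_cases hij : i = j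
  · subst hij; simp [triQ]
  · simp [triQ, hij, SimpleGraph.pathGraph_adj]

theorem stmt2 {n : ℕ} (v : Fin n → ℤ) (hv : ∀ i, 2 ≤ v i)
    (x : Fin n → ℝ) (hx : x ≠ 0)
    (h : ∀ i, 0 ≤ (triQ v).mulVec x i) :
    ∀ i, x i < 0 := by
  intro i
  set G := SimpleGraph.pathGraph n
  have hv' (j : Fin n) : (2 : ℝ) ≤ v j := by exact_mod_cast hv j
  have hdeg (j : Fin n) : (G.degree j : ℝ) ≤ v j :=
    (by exact_mod_cast SimpleGraph.pathGraph_degree_le_two j : (G.degree j : ℝ) ≤ 2).trans (hv' j)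
  have hdeg₀ : (G.degree ⟨0, i.pos⟩ : ℝ) < v ⟨0, i.pos⟩ := by
    have : (G.degree ⟨0, i.pos⟩ : ℝ) ≤ 1 := by
      exact_mod_cast SimpleGraph.pathGraph_degree_zero_le_one i.pos
    linarith [hv' ⟨0, i.pos⟩]
  rw [triQ_eq_adjMatrix_sub_diagonal] at h
  exact (SimpleGraph.pathGraph_preconnected n).lt_zero_of_adjMatrix_sub_diagonal_mulVec_nonneg
    hdeg hdeg₀ hx h i
end

section
/- Let Q be an n×n negative definite symmetric real matrix such that every entry of Q^{-1} is strictly negative. Let y ∈ ℝ^n and let D = {x ∈ ℝ^n : |x_i| ≤ |y_i| for all i}. If all entries of y are nonnegative (or all nonpositive), then for every x ∈ D with |x_{i₀}| < |y_{i₀}| for some i₀, one has xᵀQ^{-1}x > yᵀQ^{-1}y. -/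
open Matrix

theorem stmt5 {n : ℕ} (Q : Matrix (Fin n) (Fin n) ℝ)
    (hsymm : Q.IsSymm)
    (hnegdef : ∀ x : Fin n → ℝ, x ≠ 0 → x ⬝ᵥ Q.mulVec x < 0)
    (hinv : ∀ i j, Q⁻¹ i j < 0)
    (y : Fin n → ℝ) (hy : (∀ i, 0 ≤ y i) ∨ (∀ i, y i ≤ 0))
    (x : Fin n → ℝ) (hbox : ∀ i, |x i| ≤ |y i|)
    (i₀ : Fin n) (hstrict : |x i₀| < |y i₀|) :
    x ⬝ᵥ Q⁻¹.mulVec x > y ⬝ᵥ Q⁻¹.mulVec y := by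
  have habs : ∀ i j, |y i| * |y j| = y i * y j := by
    intro i j
    rcases hy with h | h
    · rw [abs_of_nonneg (h i), abs_of_nonneg (h j)]
    · rw [abs_of_nonpos (h i), abs_of_nonpos (h j)]; ring
  have key : ∀ i j, Q⁻¹ i j * (y i * y j) ≤ Q⁻¹ i j * (x i * x j) := by
    intro i j
    apply mul_le_mul_of_nonpos_left _ (hinv i j).le
    calc x i * x j ≤ |x i * x j| := le_abs_self _
      _ = |x i| * |x j| := abs_mul _ _
      _ ≤ |y i| * |y j| :=
        mul_le_mul (hbox i) (hbox j) (abs_nonneg _) (abs_nonneg _)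
      _ = y i * y j := habs i j
  have keystrict : Q⁻¹ i₀ i₀ * (y i₀ * y i₀) < Q⁻¹ i₀ i₀ * (x i₀ * x i₀) := by
    apply mul_lt_mul_of_neg_left _ (hinv i₀ i₀)
    calc x i₀ * x i₀ ≤ |x i₀| * |x i₀| := by
          rw [← abs_mul_abs_self]
      _ < |y i₀| * |y i₀| :=
          mul_lt_mul' hstrict.le hstrict (abs_nonneg _) (hstrict.trans_le' (abs_nonneg _))
      _ = y i₀ * y i₀ := habs i₀ i₀
  have expand : ∀ z : Fin n → ℝ,
      z ⬝ᵥ Q⁻¹.mulVec z = ∑ i, ∑ j, Q⁻¹ i j * (z i * z j) := by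
    intro z
    simp only [dotProduct, mulVec, Finset.mul_sum]
    exact Finset.sum_congr rfl fun i _ => Finset.sum_congr rfl fun j _ => by ring
  rw [gt_iff_lt, expand, expand]
  apply Finset.sum_lt_sum
  · intro i _
    exact Finset.sum_le_sum fun j _ => key i j
  · exact ⟨i₀, Finset.mem_univ _,
      Finset.sum_lt_sum (fun j _ => key i₀ j) ⟨i₀, Finset.mem_univ _, keystrict⟩⟩
end

section
/- Let Λ be a linear chain lattice with weights -a_1,...,-a_k (a_i ≥ 2) embedded into ⟨-1⟩^t so that no (-1)-vector lies in the orthogonal complement of the image. Then t ≤ 1 + Σ_{i=1}^{k}(a_i - 1). -/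
/-!
Write `vᵢ = f(eᵢ)` and let `Sᵢ` be the set of coordinates on which `vᵢ` is nonzero. Since
`vᵢ · vᵢ = aᵢ` is a sum of squares of integers, `|Sᵢ| ≤ aᵢ`; since `vᵢ · vᵢ₊₁ = ±1 ≠ 0`,
consecutive supports meet; and irreducibility says the supports cover all `t` coordinates,
because an uncovered coordinate vector would be a `(-1)`-vector orthogonal to the image.
A chain of finite sets in which consecutive members meet has a union of size at most
`1 + Σ (|Sᵢ| - 1)`.
-/

open Matrix

/-- The intersection matrix of a linear chain with weights `-a i`
(`1`'s on the super- and sub-diagonal). -/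
def chainM {k : ℕ} (a : Fin k → ℕ) : Matrix (Fin k) (Fin k) ℤ :=
  Matrix.of fun i j =>
    if i = j then -(a i : ℤ)
    else if (i : ℕ) + 1 = (j : ℕ) ∨ (j : ℕ) + 1 = (i : ℕ) then 1 else 0

/-- The bilinear form of the standard negative diagonal lattice `⟨-1⟩ᵗ`. -/
def negDot {t : ℕ} (x y : Fin t → ℤ) : ℤ := -(x ⬝ᵥ y)

open Finset

theorem Finset.card_union_add_one_le_of_inter_nonempty {α : Type*} [DecidableEq α]
    {s u : Finset α} (h : (s ∩ u).Nonempty) : #(s ∪ u) + 1 ≤ #s + #u := by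
  rw [← card_union_add_card_inter s u]
  exact Nat.add_le_add_left (card_pos.2 h) _

theorem Finset.card_biUnion_le_of_chain {α : Type*} [DecidableEq α] :
    ∀ {n : ℕ} (S : Fin n → Finset α),
      (∀ i j : Fin n, (i : ℕ) + 1 = j → (S i ∩ S j).Nonempty) →
      #(univ.biUnion S) ≤ 1 + ∑ i, (#(S i) - 1)
  | 0, _, _ => by simp
  | 1, S, _ => by simp; omega
  | n + 2, S, hS => by
    have ih := card_biUnion_le_of_chain (S ∘ Fin.castSucc)
      fun i j hij => hS _ _ (by simpa using hij)
    obtain ⟨x, hx⟩ := hS (Fin.castSucc (Fin.last n)) (Fin.last (n + 1)) (by simp)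
    have hx' : x ∈ univ.biUnion (S ∘ Fin.castSucc) ∩ S (Fin.last (n + 1)) :=
      mem_inter.2 ⟨mem_biUnion.2 ⟨Fin.last n, mem_univ _, (mem_inter.1 hx).1⟩,
        (mem_inter.1 hx).2⟩
    have hlink := card_union_add_one_le_of_inter_nonempty ⟨x, hx'⟩
    have hlast : 0 < #(S (Fin.last (n + 1))) := card_pos.2 ⟨x, (mem_inter.1 hx).2⟩
    have hsplit : univ.biUnion S = univ.biUnion (S ∘ Fin.castSucc) ∪ S (Fin.last (n + 1)) := by
      ext y; simp [Fin.exists_fin_succ']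
    rw [hsplit, Fin.sum_univ_castSucc]
    simp only [Function.comp_def] at ih hlink ⊢
    omega

theorem card_filter_ne_zero_le_dotProduct_self {ι : Type*} [Fintype ι] (w : ι → ℤ) :
    (#(univ.filter fun j => w j ≠ 0) : ℤ) ≤ w ⬝ᵥ w := by
  calc (#(univ.filter fun j => w j ≠ 0) : ℤ) = ∑ j ∈ univ.filter (w · ≠ 0), 1 := by simp
    _ ≤ ∑ j ∈ univ.filter (w · ≠ 0), w j * w j :=
        sum_le_sum fun j hj => Int.one_le_abs ((mem_filter.1 hj).2) |>.trans
          (by nlinarith [abs_mul_abs_self (w j), abs_nonneg (w j)])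
    _ ≤ w ⬝ᵥ w := sum_le_sum_of_subset_of_nonneg (filter_subset _ _)
        fun j _ _ => mul_self_nonneg _

theorem exists_ne_zero_of_dotProduct_ne_zero {ι : Type*} [Fintype ι] {v w : ι → ℤ}
    (h : v ⬝ᵥ w ≠ 0) : ∃ j, v j ≠ 0 ∧ w j ≠ 0 := by
  contrapose! h
  exact sum_eq_zero fun j _ => by by_cases hv : v j = 0 <;> simp [hv, h j]

section ChainEmbedding

variable {k t : ℕ} {a : Fin k → ℕ} {f : (Fin k → ℤ) →ₗ[ℤ] (Fin t → ℤ)}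

theorem dotProduct_map_single_of_form
    (hform : ∀ x y : Fin k → ℤ, negDot (f x) (f y) = x ⬝ᵥ (chainM a).mulVec y) (i j : Fin k) :
    f (Pi.single i 1) ⬝ᵥ f (Pi.single j 1) = -chainM a i j := by
  rw [← neg_neg (f _ ⬝ᵥ f _), ← negDot, hform, mulVec_single_one, single_dotProduct, one_mul]
  rfl

theorem exists_map_single_apply_ne_zero
    (hirr : ∀ z : Fin t → ℤ, (∀ x : Fin k → ℤ, negDot z (f x) = 0) → negDot z z ≠ -1)
    (j : Fin t) : ∃ i, f (Pi.single i 1) j ≠ 0 := by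
  by_contra! h
  have hcoord : (LinearMap.proj j).comp f = 0 :=
    (Pi.basisFun ℤ (Fin k)).ext fun i => by simpa using h i
  refine hirr (Pi.single j 1) (fun x => ?_) (by simp [negDot])
  simpa [negDot] using LinearMap.congr_fun hcoord x

end ChainEmbedding

theorem stmt9_general {k t : ℕ} (a : Fin k → ℕ)
    (f : (Fin k → ℤ) →ₗ[ℤ] (Fin t → ℤ))
    (hform : ∀ x y : Fin k → ℤ, negDot (f x) (f y) = x ⬝ᵥ (chainM a).mulVec y)
    (hirr : ∀ z : Fin t → ℤ, (∀ x : Fin k → ℤ, negDot z (f x) = 0) → negDot z z ≠ -1) :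
    t ≤ 1 + ∑ i, (a i - 1) := by
  set S : Fin k → Finset (Fin t) := fun i => univ.filter fun j => f (Pi.single i 1) j ≠ 0
  have hcover : univ.biUnion S = univ := eq_univ_of_forall fun j =>
    have ⟨i, hi⟩ := exists_map_single_apply_ne_zero hirr j
    mem_biUnion.2 ⟨i, mem_univ _, mem_filter.2 ⟨mem_univ _, hi⟩⟩
  have hchain : ∀ i j : Fin k, (i : ℕ) + 1 = j → (S i ∩ S j).Nonempty := by
    intro i j hij
    have hdot : f (Pi.single i 1) ⬝ᵥ f (Pi.single j 1) ≠ 0 := by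
      rw [dotProduct_map_single_of_form hform]
      simp [chainM, hij, Fin.ext_iff]; omega
    obtain ⟨l, hi, hj⟩ := exists_ne_zero_of_dotProduct_ne_zero hdot
    exact ⟨l, by simp [S, hi, hj]⟩
  have hcard : ∀ i, #(S i) ≤ a i := fun i => by
    have := card_filter_ne_zero_le_dotProduct_self (f (Pi.single i 1))
    rw [dotProduct_map_single_of_form hform] at this
    simpa [chainM] using this
  calc t = #(univ.biUnion S) := by simp [hcover]
    _ ≤ 1 + ∑ i, (#(S i) - 1) := card_biUnion_le_of_chain S hchain
    _ ≤ 1 + ∑ i, (a i - 1) := by gcongr with i; exact hcard i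

theorem stmt9 {k t : ℕ} (a : Fin k → ℕ) (ha : ∀ i, 2 ≤ a i)
    (f : (Fin k → ℤ) →ₗ[ℤ] (Fin t → ℤ))
    (hinj : Function.Injective f)
    (hform : ∀ x y : Fin k → ℤ, negDot (f x) (f y) = x ⬝ᵥ (chainM a).mulVec y)
    (hirr : ∀ z : Fin t → ℤ, (∀ x : Fin k → ℤ, negDot z (f x) = 0) → negDot z z ≠ -1) :
    t ≤ 1 + ∑ i, (a i - 1) :=
  stmt9_general a f hform hirr
end

section
/- Let 0 < q < p be coprime and let q* be the multiplicative inverse of q modulo p with 0 < q* < p. If p/q = [a_1,...,a_n] (negative continued fraction, a_i ≥ 2) with a_n ≥ 3, and p'/q' is the value of [a_1,...,a_n - 1], written in lowest terms with p', q' > 0, then p' = p - q*. -/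
/-- continuant-style recursion acting on a pair. -/
def cf2 : List ℕ → ℤ × ℤ → ℤ × ℤ
  | [], v => v
  | a :: l, v => ((a : ℤ) * (cf2 l v).1 - (cf2 l v).2, (cf2 l v).1)

lemma cf2_append (T U : List ℕ) (v : ℤ × ℤ) : cf2 (T ++ U) v = cf2 T (cf2 U v) := by
  induction T with
  | nil => rfl
  | cons a t ih => simp [cf2, ih]

lemma cf2_linear (L : List ℕ) (c d : ℤ) (v w : ℤ × ℤ) :
    cf2 L (c * v.1 + d * w.1, c * v.2 + d * w.2)
      = (c * (cf2 L v).1 + d * (cf2 L w).1, c * (cf2 L v).2 + d * (cf2 L w).2) := by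
  induction L with
  | nil => rfl
  | cons a t ih => simp only [cf2, ih, Prod.ext_iff]; exact ⟨by ring, trivial⟩

lemma cf2_det (L : List ℕ) (v w : ℤ × ℤ) :
    (cf2 L v).1 * (cf2 L w).2 - (cf2 L w).1 * (cf2 L v).2 = v.1 * w.2 - w.1 * v.2 := by
  induction L with
  | nil => rfl
  | cons a t ih => simp only [cf2]; nlinarith [ih]

lemma cf2_mono (L : List ℕ) (h2 : ∀ a ∈ L, 2 ≤ a) (v : ℤ × ℤ)
    (h0 : 0 ≤ v.2) (h1 : v.2 < v.1) :
    0 ≤ (cf2 L v).2 ∧ (cf2 L v).2 < (cf2 L v).1 := by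
  induction L with
  | nil => exact ⟨h0, h1⟩
  | cons a t ih =>
    have ha : 2 ≤ a := h2 a (List.mem_cons_self)
    have ht := ih (fun b hb => h2 b (List.mem_cons_of_mem a hb))
    have ha' : (2:ℤ) ≤ (a:ℤ) := by exact_mod_cast ha
    simp only [cf2]
    constructor
    · linarith [ht.1, ht.2]
    · nlinarith [ht.1, ht.2]

lemma cf2_mono' (L : List ℕ) (h2 : ∀ a ∈ L, 2 ≤ a) (v : ℤ × ℤ)
    (h0 : 0 ≤ v.2) (h1 : v.2 ≤ v.1) (h3 : 1 ≤ v.1) :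
    0 ≤ (cf2 L v).2 ∧ (cf2 L v).2 ≤ (cf2 L v).1 ∧ 1 ≤ (cf2 L v).1 := by
  induction L with
  | nil => exact ⟨h0, h1, h3⟩
  | cons a t ih =>
    have ha : 2 ≤ a := h2 a (List.mem_cons_self)
    have ht := ih (fun b hb => h2 b (List.mem_cons_of_mem a hb))
    have ha' : (2:ℤ) ≤ (a:ℤ) := by exact_mod_cast ha
    simp only [cf2]
    refine ⟨by linarith [ht.2.2], ?_, ?_⟩
    · nlinarith [ht.1, ht.2.1, ht.2.2]
    · nlinarith [ht.1, ht.2.1, ht.2.2]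

lemma cf2_val (L : List ℕ) (h2 : ∀ a ∈ L, 2 ≤ a) :
    ncf (L.map (fun a => (a:ℚ))) = ((cf2 L (1,0)).1 : ℚ) / ((cf2 L (1,0)).2 : ℚ) := by
  induction L with
  | nil => simp [ncf, cf2]
  | cons a t ih =>
    have ht := ih (fun b hb => h2 b (List.mem_cons_of_mem a hb))
    have hm := cf2_mono t (fun b hb => h2 b (List.mem_cons_of_mem a hb)) (1,0) (by norm_num) (by norm_num)
    have hN : (1:ℤ) ≤ (cf2 t (1,0)).1 := by linarith [hm.1, hm.2]
    have hNQ : ((cf2 t (1,0)).1 : ℚ) ≠ 0 := by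
      have : (0:ℚ) < ((cf2 t (1,0)).1 : ℚ) := by exact_mod_cast lt_of_lt_of_le one_pos hN
      linarith
    have hcons : ncf ((a :: t).map (fun a => (a:ℚ)))
        = (a:ℚ) - (ncf (t.map (fun a => (a:ℚ))))⁻¹ := rfl
    rw [hcons, ht, inv_div]
    simp only [cf2]
    push_cast
    field_simp

lemma cf2_D_pos (L : List ℕ) (hne : L ≠ []) (h2 : ∀ a ∈ L, 2 ≤ a) :
    1 ≤ (cf2 L (1,0)).2 := by
  cases L with
  | nil => exact absurd rfl hne
  | cons a t =>
    have hm := cf2_mono t (fun b hb => h2 b (List.mem_cons_of_mem a hb)) (1,0) (by norm_num) (by norm_num)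
    simp only [cf2]
    linarith [hm.1, hm.2]

lemma frac_eq (a b c d : ℤ) (hb : 0 < b) (hd : 0 < d) (h1 : IsCoprime a b)
    (h2 : IsCoprime c d) (h : (a:ℚ)/b = (c:ℚ)/d) : a = c ∧ b = d := by
  have hb' : (b:ℚ) ≠ 0 := by exact_mod_cast hb.ne'
  have hd' : (d:ℚ) ≠ 0 := by exact_mod_cast hd.ne'
  have hQ : (a:ℚ) * d = c * b := by field_simp at h; linarith
  have hZ : a * d = c * b := by exact_mod_cast hQ
  have hbd : b ∣ d := by
    have : b ∣ a * d := ⟨c, by linarith⟩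
    exact (h1.symm).dvd_of_dvd_mul_left this
  have hdb : d ∣ b := by
    have : d ∣ c * b := ⟨a, by linarith⟩
    exact (h2.symm).dvd_of_dvd_mul_left this
  have hbd' : b = d := Int.dvd_antisymm hb.le hd.le hbd hdb
  subst hbd'
  refine ⟨?_, rfl⟩
  have := mul_right_cancel₀ hb.ne' hZ
  linarith [this]

/-- If `p/q = [a₁,…,aₙ]`, `q*` is the inverse of `q` mod `p` with `0 < q* < p`,
and `p'/q'` (in lowest terms) is the value of `[a₁,…,aₙ - 1]`, then `p' = p - q*`. -/
theorem stmt16 (L : List ℕ) (hne : L ≠ []) (hL2 : ∀ a ∈ L, 2 ≤ a)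
    (hlast : 3 ≤ L.getLast hne)
    (p q : ℕ) (hq : 0 < q) (hqp : q < p) (hcop : Nat.Coprime p q)
    (hval : ncf (L.map (fun a => (a : ℚ))) = (p : ℚ) / (q : ℚ))
    (qs : ℕ) (hqs : 0 < qs) (hqsp : qs < p) (hinv : (qs * q) % p = 1)
    (p' q' : ℕ) (hq' : 0 < q') (hcop' : Nat.Coprime p' q')
    (hval' : ncf ((L.dropLast ++ [L.getLast hne - 1]).map (fun a => (a : ℚ)))
        = (p' : ℚ) / (q' : ℚ)) :
    p' = p - qs := by
  set T := L.dropLast with hT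
  set a := L.getLast hne with ha
  have hTa : T ++ [a] = L := List.dropLast_append_getLast hne
  have hT2 : ∀ b ∈ T, 2 ≤ b := fun b hb => hL2 b (List.dropLast_subset L hb)
  set L' := T ++ [a - 1] with hL'
  have hL'2 : ∀ b ∈ L', 2 ≤ b := by
    intro b hb
    rcases List.mem_append.1 hb with h | h
    · exact hT2 b h
    · simp at h; omega
  have hL'ne : L' ≠ [] := by simp [hL']
  set NT := cf2 T (1,0) with hNT
  set RT := cf2 T (0,1) with hRT
  have hlinA : ∀ x : ℤ, cf2 T (x, 1) = (x * NT.1 + RT.1, x * NT.2 + RT.2) := by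
    intro x
    have h := cf2_linear T x 1 (1,0) (0,1)
    simpa using h
  have hNDL : cf2 L (1,0) = ((a:ℤ) * NT.1 + RT.1, (a:ℤ) * NT.2 + RT.2) := by
    rw [← hTa, cf2_append]
    have h1 : cf2 [a] ((1:ℤ),(0:ℤ)) = ((a:ℤ), 1) := by simp [cf2]
    rw [h1, hlinA]
  have hcast : ((a-1:ℕ):ℤ) = (a:ℤ) - 1 := by omega
  have hNDL' : cf2 L' (1,0) = (((a:ℤ)-1) * NT.1 + RT.1, ((a:ℤ)-1) * NT.2 + RT.2) := by
    rw [hL', cf2_append]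
    have h1 : cf2 [a-1] ((1:ℤ),(0:ℤ)) = (((a:ℤ)-1), 1) := by simp [cf2, hcast]
    rw [h1, hlinA]
  have hdet : NT.1 * RT.2 - RT.1 * NT.2 = 1 := by
    have h := cf2_det T (1,0) (0,1); simpa using h
  have hmT := cf2_mono T hT2 (1,0) (by norm_num) (by norm_num)
  have hNT1 : 1 ≤ NT.1 := by linarith [hmT.1, hmT.2]
  have hsum : cf2 T (1,1) = (NT.1 + RT.1, NT.2 + RT.2) := by
    have h := cf2_linear T 1 1 (1,0) (0,1); simpa using h
  have hmS := cf2_mono' T hT2 (1,1) (by norm_num) (by norm_num) (by norm_num)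
  rw [hsum] at hmS
  -- identify p, q with the continuants of L
  have hcopPQ : IsCoprime (p:ℤ) (q:ℤ) := Int.isCoprime_iff_gcd_eq_one.mpr (by exact_mod_cast hcop)
  have hcopPQ' : IsCoprime (p':ℤ) (q':ℤ) := Int.isCoprime_iff_gcd_eq_one.mpr (by exact_mod_cast hcop')
  have hcopL : IsCoprime (cf2 L (1,0)).1 (cf2 L (1,0)).2 := by
    have h := cf2_det L (1,0) (0,1)
    simp at h
    exact ⟨(cf2 L (0,1)).2, -(cf2 L (0,1)).1, by linear_combination h⟩
  have hcopL' : IsCoprime (cf2 L' (1,0)).1 (cf2 L' (1,0)).2 := by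
    have h := cf2_det L' (1,0) (0,1)
    simp at h
    exact ⟨(cf2 L' (0,1)).2, -(cf2 L' (0,1)).1, by linear_combination h⟩
  have hpq := frac_eq (cf2 L (1,0)).1 (cf2 L (1,0)).2 p q
    (by have := cf2_D_pos L hne hL2; linarith) (by exact_mod_cast hq) hcopL hcopPQ
    (by push_cast; rw [← cf2_val L hL2]; exact hval)
  have hp'q' := frac_eq (cf2 L' (1,0)).1 (cf2 L' (1,0)).2 p' q'
    (by have := cf2_D_pos L' hL'ne hL'2; linarith) (by exact_mod_cast hq') hcopL' hcopPQ'
    (by push_cast; rw [← cf2_val L' hL'2]; exact hval')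
  have hp : (p:ℤ) = (a:ℤ) * NT.1 + RT.1 := by rw [← hpq.1, hNDL]
  have hqZ : (q:ℤ) = (a:ℤ) * NT.2 + RT.2 := by rw [← hpq.2, hNDL]
  have hp' : (p':ℤ) = ((a:ℤ)-1) * NT.1 + RT.1 := by rw [← hp'q'.1, hNDL']
  have ha3 : (3:ℤ) ≤ (a:ℤ) := by exact_mod_cast hlast
  -- p' = p - NT.1 and p' ≥ 1
  have hp'eq : (p':ℤ) = (p:ℤ) - NT.1 := by rw [hp', hp]; ring
  have hS1 : 1 ≤ NT.1 + RT.1 := by simpa using hmS.2.2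
  have hp'pos : 1 ≤ (p':ℤ) := by
    rw [hp']
    nlinarith [hS1, hNT1, ha3]
  -- the key Bezout identity:  NT.1 * q - NT.2 * p = 1
  have hbez : NT.1 * (q:ℤ) - NT.2 * (p:ℤ) = 1 := by
    rw [hp, hqZ]; linear_combination hdet
  -- from hinv: qs * q = p * k + 1
  obtain ⟨k, hk⟩ : ∃ k : ℤ, (qs:ℤ) * (q:ℤ) = (p:ℤ) * k + 1 := by
    refine ⟨((qs * q) / p : ℕ), ?_⟩
    have h := Nat.div_add_mod (qs * q) p
    rw [hinv] at h
    have h' : ((p:ℤ)) * (((qs*q)/p : ℕ):ℤ) + 1 = (qs:ℤ)*(q:ℤ) := by exact_mod_cast h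
    linarith
  have hdvd : (p:ℤ) ∣ ((qs:ℤ) - NT.1) := by
    have hd : (p:ℤ) ∣ ((qs:ℤ) - NT.1) * (q:ℤ) :=
      ⟨k - NT.2, by linear_combination hk - hbez⟩
    exact hcopPQ.dvd_of_dvd_mul_right hd
  obtain ⟨m, hm⟩ := hdvd
  have hpp : (0:ℤ) < (p:ℤ) := by exact_mod_cast (by omega : 0 < p)
  have hqs1 : (1:ℤ) ≤ (qs:ℤ) := by omega
  have hqs2 : (qs:ℤ) ≤ (p:ℤ) - 1 := by omega
  have hNTub : NT.1 ≤ (p:ℤ) - 1 := by linarith [hp'eq, hp'pos]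
  have hlb : (p:ℤ) * (-1) < (p:ℤ) * m := by
    have : -(p:ℤ) < (qs:ℤ) - NT.1 := by linarith
    rw [← hm]; linarith
  have hub : (p:ℤ) * m < (p:ℤ) * 1 := by
    have : (qs:ℤ) - NT.1 < (p:ℤ) := by linarith
    rw [← hm]; linarith
  have hm0 : m = 0 := by
    have h1 := (mul_lt_mul_iff_right₀ hpp).mp hlb
    have h2 := (mul_lt_mul_iff_right₀ hpp).mp hub
    omega
  have hqsNT : (qs:ℤ) = NT.1 := by rw [hm0, mul_zero] at hm; linarith
  have : (p':ℤ) = (p:ℤ) - (qs:ℤ) := by rw [hp'eq, hqsNT]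
  omega
end
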